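/- arXiv:2407.21487 — 11 statements merged into one kernel-verified Lean document; each statement's English description precedes it below -/
import Mathlib

section
/- The only triangular numbers whose decimal representation consists of a single repeated digit are 1, 3, 6, 55, 66, and 666. Precisely: for positive integers k, i and a digit d with 1 ≤ d ≤ 9, one has k(k+1)/2 = d·(10^i − 1)/9 if and only if (k, d, i) ∈ {(1,1,1), (2,3,1), (3,6,1), (10,5,2), (11,6,2), (36,6,3)}. -/
set_option maxRecDepth 100000


/- ## d = 5 : descent for x^2 + 31 = 40 t^2, invariant set mod 28 -/
def S5 : List (ℕ × ℕ) := [(3,1),(3,27),(5,0),(7,10),(7,18),(9,0),(11,13),(11,15),(17,13),(17,15),(19,0),(21,10),(21,18),(23,0),(25,1),(25,27)]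
def B5 : List ℕ := [4,8,12,16,20,24]

lemma S5_closed : ∀ p ∈ S5, ((19*p.1+120*p.2)%28, (3*p.1+19*p.2)%28) ∈ S5 ∧ ((28-p.1)%28, p.2) ∈ S5 := by decide

lemma S5_notB5 : ∀ p ∈ S5, p.2 ∉ B5 := by decide

lemma B5_closed : ∀ b ∈ B5, (b*10) % 28 ∈ B5 := by decide

lemma B5_pow : ∀ j : ℕ, 10^(j+2) % 28 ∈ B5 := by
  intro j
  induction j with
  | zero => decide
  | succ n ihn =>
    have e : (10:ℕ)^(n+1+2) = 10^(n+2)*10 := by rw [pow_succ]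
    have := B5_closed _ ihn
    rw [e, Nat.mul_mod, show (10:ℕ)%28 = 10 from rfl]
    exact this

lemma inv5 : ∀ t y : ℕ, y*y + 31 = 40*(t*t) → (y % 28, t % 28) ∈ S5 := by
  intro t
  induction t using Nat.strong_induction_on with
  | _ t ih =>
    intro y h
    by_cases ht : t ≤ 2
    · have hy : y < 12 := by
        by_contra hc
        push_neg at hc
        have h1 := Nat.mul_le_mul hc hc
        have h2 := Nat.mul_le_mul ht ht
        omega
      have base : ∀ t' < 3, ∀ y' < 12, y'*y'+31 = 40*(t'*t') → (y' = 3 ∧ t' = 1) := by decide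
      obtain ⟨rfl, rfl⟩ := base t (by omega) y hy h
      decide
    · push_neg at ht
      have ha : 3*y < 19*t := by
        by_contra hc
        push_neg at hc
        have h1 := Nat.mul_le_mul hc hc
        ring_nf at h1
        nlinarith
      have hb : 6*t < y := by
        by_contra hc
        push_neg at hc
        have h1 := Nat.mul_le_mul hc hc
        have h2 : 3*3 ≤ t*t := Nat.mul_le_mul ht ht
        ring_nf at h1
        nlinarith
      set t' := 19*t - 3*y with ht'def
      have ht'2 : t' < t := by omega
      rcases le_or_gt (120*t) (19*y) with hc | hc
      · set x' := 19*y - 120*t with hx'def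
        have hy' : y = 19*x' + 120*t' := by omega
        have ht'' : t = 3*x' + 19*t' := by omega
        have heq : x'*x' + 31 = 40*(t'*t') := by
          have h' := h
          rw [hy', ht''] at h'
          ring_nf at h' ⊢
          linarith
        have hm := ih t' ht'2 x' heq
        have hcl := (S5_closed _ hm).1
        have e1 : y % 28 = (19*(x' % 28)+120*(t' % 28)) % 28 := by omega
        have e2 : t % 28 = (3*(x' % 28)+19*(t' % 28)) % 28 := by omega
        rw [e1, e2]
        exact hcl
      · set x' := 120*t - 19*y with hx'def
        have hy' : y + 19*x' = 120*t' := by omega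
        have ht'' : t + 3*x' = 19*t' := by omega
        have heq : x'*x' + 31 = 40*(t'*t') := by
          have e1 : (y + 19*x')*(y+19*x') = (120*t')*(120*t') := by rw [hy']
          have e2 : (t + 3*x')*(t+3*x') = (19*t')*(19*t') := by rw [ht'']
          have hR : 19*y + x' = 120*t := by omega
          have e3 : (19*y + x')*x' = (120*t)*x' := by rw [hR]
          have h' := h
          ring_nf at e1 e2 e3 h' ⊢
          linarith
        have hm := ih t' ht'2 x' heq
        have hneg := (S5_closed _ hm).2
        have hcl := (S5_closed _ hneg).1
        have hx28 : x' % 28 < 28 := Nat.mod_lt _ (by norm_num)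
        have e1 : y % 28 = (19*((28 - x' % 28) % 28)+120*(t' % 28)) % 28 := by omega
        have e2 : t % 28 = (3*((28 - x' % 28) % 28)+19*(t' % 28)) % 28 := by omega
        rw [e1, e2]
        exact hcl

lemma d5_large (M i : ℕ) (hi : 4 ≤ i) (h : M*M + 31 = 40*10^i) : False := by
  rcases Nat.even_or_odd i with ⟨j, hj⟩ | ⟨j, hj⟩
  · -- i = j + j, j ≥ 2
    have e : 40*10^i = 40*(10^j*10^j) := by rw [hj, pow_add]
    have h' : M*M + 31 = 40*(10^j*10^j) := by rw [← e]; exact h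
    have hm := inv5 (10^j) M h'
    have hb : 10^j % 28 ∈ B5 := by
      obtain ⟨a, rfl⟩ : ∃ a, j = a + 2 := ⟨j - 2, by omega⟩
      exact B5_pow a
    exact S5_notB5 _ hm hb
  · -- i = 2j+1, j ≥ 2 : factorization, 40*10^i is a perfect square (20*10^j)^2
    have e : 40*10^i = (20*10^j)*(20*10^j) := by
      rw [hj, show 2*j+1 = (j+j)+1 by omega, pow_succ, pow_add]; ring
    rw [e] at h
    set z := 20*10^j with hz
    have hMz : M < z := by
      by_contra hcon
      push_neg at hcon
      have := Nat.mul_le_mul hcon hcon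
      omega
    set a := z - M with hadef
    have hza : z = M + a := by omega
    have h' : M*M + 31 = (M+a)*(M+a) := by rw [← hza]; exact h
    have k1 : a*a + 2*(a*M) = 31 := by ring_nf at h' ⊢; nlinarith [h']
    have ha1 : 1 ≤ a := by omega
    have hM15 : M ≤ a*M := Nat.le_mul_of_pos_left M (by omega)
    have haa : a ≤ a*a := Nat.le_mul_of_pos_left a (by omega)
    have h100 : 100 ≤ 10^j := by
      calc (100:ℕ) = 10^2 := by norm_num
      _ ≤ 10^j := Nat.pow_le_pow_right (by norm_num) (by omega)
    omega


def S6e : List (ℕ × ℕ) := [(4,1),(4,1455),(5,2),(5,1454),(11,6),(11,1450),(16,9),(16,1447),(40,23),(40,1433),(59,34),(59,1422),(108,209),(108,1247),(116,335),(116,1121),(149,86),(149,1370),(152,313),(152,1143),(213,678),(213,778),(219,670),(219,786),(220,127),(220,1329),(296,425),(296,1031),(352,439),(352,1017),(411,310),(411,1146),(452,113),(452,1343),(464,103),(464,1353),(556,321),(556,1135),(565,226),(565,1230),(613,526),(613,930),(619,258),(619,1198),(635,474),(635,982),(683,554),(683,902),(773,554),(773,902),(821,474),(821,982),(837,258),(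837,1198),(843,526),(843,930),(891,226),(891,1230),(900,321),(900,1135),(992,103),(992,1353),(1004,113),(1004,1343),(1045,310),(1045,1146),(1104,439),(1104,1017),(1160,425),(1160,1031),(1236,127),(1236,1329),(1237,670),(1237,786),(1243,678),(1243,778),(1304,313),(1304,1143),(1307,86),(1307,1370),(1340,335),(1340,1121),(1348,209),(1348,1247),(1397,34),(1397,1422),(1416,23),(1416,1433),(1440,9),(1440,1447),(1445,6),(1445,1450),(1451,2),(1451,1454),(1452,1),(1452,1455)]
def B6e : List ℕ := [400, 1088, 688, 1056, 368, 768]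
def S6o : List (ℕ × ℕ) := [(21,1),(87,670),(111,331),(131,472),(175,208),(219,10),(285,441),(331,111),(417,111),(463,441),(529,10),(573,208),(617,472),(637,331),(661,670),(727,1)]
def B6o : List ℕ := [100, 252, 276, 516, 672, 736, 628, 296, 716, 428, 540, 164, 144, 692, 188, 384]

lemma S6e_closed : ∀ p ∈ S6e, ((2*p.1+3*p.2)%1456, (p.1+2*p.2)%1456) ∈ S6e ∧ ((1456-p.1)%1456, p.2) ∈ S6e := by decide
lemma S6e_notB : ∀ p ∈ S6e, p.1 ∉ B6e := by decide
lemma B6e_closed : ∀ b ∈ B6e, (b*10) % 1456 ∈ B6e := by decide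
lemma S6o_closed : ∀ p ∈ S6o, ((241*p.1+5280*p.2)%748, (11*p.1+241*p.2)%748) ∈ S6o ∧ ((748-p.1)%748, p.2) ∈ S6o := by decide
lemma S6o_notB : ∀ p ∈ S6o, p.2 ∉ B6o := by decide
lemma B6o_closed : ∀ b ∈ B6o, (b*10) % 748 ∈ B6o := by decide

lemma B6e_pow : ∀ j : ℕ, (400*10^j) % 1456 ∈ B6e := by
  intro j
  induction j with
  | zero => decide
  | succ n ihn =>
    have e : 400*10^(n+1) = (400*10^n)*10 := by rw [pow_succ]; ring
    have := B6e_closed _ ihn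
    rw [e, Nat.mul_mod, show (10:ℕ)%1456 = 10 from rfl]
    exact this

lemma B6o_pow : ∀ j : ℕ, (100*10^j) % 748 ∈ B6o := by
  intro j
  induction j with
  | zero => decide
  | succ n ihn =>
    have e : 100*10^(n+1) = (100*10^n)*10 := by rw [pow_succ]; ring
    have := B6o_closed _ ihn
    rw [e, Nat.mul_mod, show (10:ℕ)%748 = 10 from rfl]
    exact this

lemma inv6e : ∀ m z : ℕ, z*z = 3*(m*m) + 13 → (z % 1456, m % 1456) ∈ S6e := by
  intro m
  induction m using Nat.strong_induction_on with
  | _ m ih =>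
    intro z h
    by_cases hm : m ≤ 3
    · have hz : z < 7 := by
        by_contra hc
        push_neg at hc
        have h1 := Nat.mul_le_mul hc hc
        have h2 := Nat.mul_le_mul hm hm
        omega
      have base : ∀ m' < 4, ∀ z' < 7, z'*z' = 3*(m'*m') + 13 → ((z' = 4 ∧ m' = 1) ∨ (z' = 5 ∧ m' = 2)) := by decide
      rcases base m (by omega) z hz h with ⟨rfl, rfl⟩ | ⟨rfl, rfl⟩ <;> decide
    · push_neg at hm
      have ha : z < 2*m := by
        by_contra hc
        push_neg at hc
        have h1 := Nat.mul_le_mul hc hc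
        have h2 : 4*4 ≤ m*m := Nat.mul_le_mul hm hm
        ring_nf at h1
        nlinarith
      have hb : m < z := by
        by_contra hc
        push_neg at hc
        have h1 := Nat.mul_le_mul hc hc
        nlinarith
      set m' := 2*m - z with hm'def
      have hm'2 : m' < m := by omega
      rcases le_or_gt (3*m) (2*z) with hc | hc
      · set z' := 2*z - 3*m with hz'def
        have hz' : z = 2*z' + 3*m' := by omega
        have hm'' : m = z' + 2*m' := by omega
        have heq : z'*z' = 3*(m'*m') + 13 := by
          have h' := h
          rw [hz', hm''] at h'
          ring_nf at h' ⊢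
          linarith
        have hmem := ih m' hm'2 z' heq
        have hcl := (S6e_closed _ hmem).1
        have e1 : z % 1456 = (2*(z' % 1456)+3*(m' % 1456)) % 1456 := by omega
        have e2 : m % 1456 = ((z' % 1456)+2*(m' % 1456)) % 1456 := by omega
        rw [e1, e2]
        exact hcl
      · set z' := 3*m - 2*z with hz'def
        have hz' : z + 2*z' = 3*m' := by omega
        have hm'' : m + z' = 2*m' := by omega
        have heq : z'*z' = 3*(m'*m') + 13 := by
          have e1 : (z + 2*z')*(z + 2*z') = (3*m')*(3*m') := by rw [hz']
          have e2 : (m + z')*(m + z') = (2*m')*(2*m') := by rw [hm'']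
          have hR : 2*z + z' = 3*m := by omega
          have e3 : (2*z + z')*z' = (3*m)*z' := by rw [hR]
          have h' := h
          ring_nf at e1 e2 e3 h' ⊢
          linarith
        have hmem := ih m' hm'2 z' heq
        have hneg := (S6e_closed _ hmem).2
        have hcl := (S6e_closed _ hneg).1
        have hx : z' % 1456 < 1456 := Nat.mod_lt _ (by norm_num)
        have e1 : z % 1456 = (2*((1456 - z' % 1456) % 1456)+3*(m' % 1456)) % 1456 := by omega
        have e2 : m % 1456 = (((1456 - z' % 1456) % 1456)+2*(m' % 1456)) % 1456 := by omega
        rw [e1, e2]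
        exact hcl

lemma inv6o : ∀ w X : ℕ, X*X + 39 = 480*(w*w) → (X % 748, w % 748) ∈ S6o := by
  intro w
  induction w using Nat.strong_induction_on with
  | _ w ih =>
    intro X h
    by_cases hw : w ≤ 3
    · have hX : X < 66 := by
        by_contra hc
        push_neg at hc
        have h1 := Nat.mul_le_mul hc hc
        have h2 := Nat.mul_le_mul hw hw
        omega
      have base : ∀ w' < 4, ∀ X' < 66, X'*X' + 39 = 480*(w'*w') → (X' = 21 ∧ w' = 1) := by decide
      obtain ⟨rfl, rfl⟩ := base w (by omega) X hX h
      decide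
    · push_neg at hw
      have ha : 11*X < 241*w := by
        by_contra hc
        push_neg at hc
        have h1 := Nat.mul_le_mul hc hc
        ring_nf at h1
        nlinarith
      have hb : 240*w < 11*X := by
        by_contra hc
        push_neg at hc
        have h1 := Nat.mul_le_mul hc hc
        have h2 : 4*4 ≤ w*w := Nat.mul_le_mul hw hw
        ring_nf at h1
        nlinarith
      set w' := 241*w - 11*X with hw'def
      have hw'2 : w' < w := by omega
      rcases le_or_gt (5280*w) (241*X) with hc | hc
      · set X' := 241*X - 5280*w with hX'def
        have hX' : X = 241*X' + 5280*w' := by omega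
        have hw'' : w = 11*X' + 241*w' := by omega
        have heq : X'*X' + 39 = 480*(w'*w') := by
          have h' := h
          rw [hX', hw''] at h'
          ring_nf at h' ⊢
          linarith
        have hmem := ih w' hw'2 X' heq
        have hcl := (S6o_closed _ hmem).1
        have e1 : X % 748 = (241*(X' % 748)+5280*(w' % 748)) % 748 := by omega
        have e2 : w % 748 = (11*(X' % 748)+241*(w' % 748)) % 748 := by omega
        rw [e1, e2]
        exact hcl
      · set X' := 5280*w - 241*X with hX'def
        have hX' : X + 241*X' = 5280*w' := by omega
        have hw'' : w + 11*X' = 241*w' := by omega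
        have heq : X'*X' + 39 = 480*(w'*w') := by
          have e1 : (X + 241*X')*(X + 241*X') = (5280*w')*(5280*w') := by rw [hX']
          have e2 : (w + 11*X')*(w + 11*X') = (241*w')*(241*w') := by rw [hw'']
          have hR : 241*X + X' = 5280*w := by omega
          have e3 : (241*X + X')*X' = (5280*w)*X' := by rw [hR]
          have h' := h
          ring_nf at e1 e2 e3 h' ⊢
          linarith
        have hmem := ih w' hw'2 X' heq
        have hneg := (S6o_closed _ hmem).2
        have hcl := (S6o_closed _ hneg).1
        have hx : X' % 748 < 748 := Nat.mod_lt _ (by norm_num)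
        have e1 : X % 748 = (241*((748 - X' % 748) % 748)+5280*(w' % 748)) % 748 := by omega
        have e2 : w % 748 = (11*((748 - X' % 748) % 748)+241*(w' % 748)) % 748 := by omega
        rw [e1, e2]
        exact hcl

lemma d6_large (c i : ℕ) (hi : 4 ≤ i) (h : 3*(c*c) + 13 = 16*10^i) : False := by
  rcases Nat.even_or_odd i with ⟨j, hj⟩ | ⟨j, hj⟩
  · have e : 16*10^i = (4*10^j)*(4*10^j) := by rw [hj, pow_add]; ring
    have h' : (4*10^j)*(4*10^j) = 3*(c*c) + 13 := by omega
    have hmem := inv6e c (4*10^j) h'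
    have hb : (4*10^j) % 1456 ∈ B6e := by
      obtain ⟨a, rfl⟩ : ∃ a, j = a + 2 := ⟨j - 2, by omega⟩
      rw [show 4*10^(a+2) = 400*10^a by rw [pow_add]; ring]
      exact B6e_pow a
    exact S6e_notB _ hmem hb
  · have e : 48*10^i = 480*(10^j*10^j) := by
      rw [hj, show 2*j+1 = (j+j)+1 by omega, pow_succ, pow_add]; ring
    have h9 : (3*c)*(3*c) + 39 = 480*(10^j*10^j) := by
      have e3 : (3*c)*(3*c) = 9*(c*c) := by ring
      omega
    have hmem := inv6o (10^j) (3*c) h9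
    have hb : 10^j % 748 ∈ B6o := by
      obtain ⟨a, rfl⟩ : ∃ a, j = a + 2 := ⟨j - 2, by omega⟩
      rw [show (10:ℕ)^(a+2) = 100*10^a by rw [pow_add]; ring]
      exact B6o_pow a
    exact S6o_notB _ hmem hb


lemma easy_digit (M d i : ℕ) (hi : 4 ≤ i) (hM : M*M + 8*d = 8*(d*10^i) + 9)
    (hns : ∀ r < 25, ¬ ((r*r + 8*d) % 25 = 9)) : False := by
  have h4 : (10:ℕ)^i = 10000 * 10^(i-4) := by
    rw [show (10000:ℕ) = 10^4 by norm_num, ← pow_add]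
    congr 1
    omega
  have e : 8*(d*10^i) = 25*(3200*(d*10^(i-4))) := by rw [h4]; ring
  apply hns (M % 25) (Nat.mod_lt _ (by norm_num))
  have hmm := Nat.mul_mod M M 25
  omega

lemma d1_large (M i : ℕ) (hi : 2 ≤ i) (h : M*M = 8*10^i + 1) : False := by
  have hModd : M % 2 = 1 := by
    rcases Nat.even_or_odd M with ⟨a, rfl⟩ | ho
    · exfalso
      have e : (a+a)*(a+a) = 4*(a*a) := by ring
      omega
    · exact Nat.odd_iff.mp ho
  obtain ⟨c, rfl⟩ : ∃ c, M = 2*c+1 := ⟨M/2, by omega⟩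
  have hcc : c*(c+1) = 2^(i+1) * 5^i := by
    have e1 : (2*c+1)*(2*c+1) = 4*(c*(c+1)) + 1 := by ring
    have e2 : (2:ℕ)^(i+1) * 5^i = 2*10^i := by
      rw [show (10:ℕ) = 2*5 by norm_num, mul_pow, pow_succ]
      ring
    omega
  have hpos : 0 < 2^(i+1) * 5^i := by positivity
  have hcpos : 0 < c := by
    rcases Nat.eq_zero_or_pos c with hc0 | h1
    · rw [hc0] at hcc; simp at hcc
    · exact h1
  have h5 : 5^i ∣ c ∨ 5^i ∣ c + 1 := by
    have hd : (5:ℕ)^i ∣ c*(c+1) := by rw [hcc]; exact dvd_mul_left _ _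
    by_cases h5c : (5:ℕ) ∣ c
    · left
      have hnd : ¬ (5:ℕ) ∣ (c+1) := by omega
      have hcop5 : Nat.Coprime (5^i) (c+1) :=
        Nat.Coprime.pow_left _ ((Nat.Prime.coprime_iff_not_dvd (by norm_num)).mpr hnd)
      exact hcop5.dvd_of_dvd_mul_right hd
    · right
      have hcop5 : Nat.Coprime (5^i) c :=
        Nat.Coprime.pow_left _ ((Nat.Prime.coprime_iff_not_dvd (by norm_num)).mpr h5c)
      exact hcop5.dvd_of_dvd_mul_left hd
  have h2 : 2^(i+1) ∣ c ∨ 2^(i+1) ∣ c + 1 := by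
    have hd : (2:ℕ)^(i+1) ∣ c*(c+1) := by rw [hcc]; exact dvd_mul_right _ _
    by_cases h2c : (2:ℕ) ∣ c
    · left
      have hnd : ¬ (2:ℕ) ∣ (c+1) := by omega
      have hcop2 : Nat.Coprime (2^(i+1)) (c+1) :=
        Nat.Coprime.pow_left _ ((Nat.Prime.coprime_iff_not_dvd (by norm_num)).mpr hnd)
      exact hcop2.dvd_of_dvd_mul_right hd
    · right
      have hcop2 : Nat.Coprime (2^(i+1)) c :=
        Nat.Coprime.pow_left _ ((Nat.Prime.coprime_iff_not_dvd (by norm_num)).mpr h2c)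
      exact hcop2.dvd_of_dvd_mul_left hd
  have b1 : (8:ℕ) ≤ 2^(i+1) := by
    calc (8:ℕ) = 2^3 := by norm_num
    _ ≤ 2^(i+1) := Nat.pow_le_pow_right (by norm_num) (by omega)
  have b2 : (25:ℕ) ≤ 5^i := by
    calc (25:ℕ) = 5^2 := by norm_num
    _ ≤ 5^i := Nat.pow_le_pow_right (by norm_num) (by omega)
  have hcop25 : Nat.Coprime (2^(i+1)) (5^i) :=
    Nat.Coprime.pow _ _ (by norm_num)
  rcases h5 with h5 | h5 <;> rcases h2 with h2 | h2
  · -- both divide c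
    have hdvd : 2^(i+1) * 5^i ∣ c := hcop25.mul_dvd_of_dvd_of_dvd h2 h5
    have hle := Nat.le_of_dvd hcpos hdvd
    nlinarith
  · -- 5^i ∣ c, 2^(i+1) ∣ c+1
    obtain ⟨a, hA⟩ := h5
    obtain ⟨b, hB⟩ := h2
    have e : (5^i*a)*(2^(i+1)*b) = (2^(i+1)*5^i)*(a*b) := by ring
    have hab : a*b = 1 := by
      apply Nat.eq_of_mul_eq_mul_left hpos
      rw [← e, ← hA, ← hB, hcc, mul_one]
    have ha1 := Nat.eq_one_of_mul_eq_one_right hab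
    have hb1 := Nat.eq_one_of_mul_eq_one_left hab
    rw [ha1, mul_one] at hA
    rw [hb1, mul_one] at hB
    -- 5^i + 1 = 2^(i+1)
    have m4 : 5^i % 4 = 1 := by simp [Nat.pow_mod]
    have split : (2:ℕ)^(i+1) = 4*2^(i-1) := by
      rw [show i+1 = 2+(i-1) by omega, pow_add]
      norm_num
    omega
  · -- 5^i ∣ c+1, 2^(i+1) ∣ c : 2^(i+1) + 1 = 5^i
    obtain ⟨a, hA⟩ := h2
    obtain ⟨b, hB⟩ := h5
    have e : (2^(i+1)*a)*(5^i*b) = (2^(i+1)*5^i)*(a*b) := by ring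
    have hab : a*b = 1 := by
      apply Nat.eq_of_mul_eq_mul_left hpos
      rw [← e, ← hA, ← hB, hcc, mul_one]
    have ha1 := Nat.eq_one_of_mul_eq_one_right hab
    have hb1 := Nat.eq_one_of_mul_eq_one_left hab
    rw [ha1, mul_one] at hA
    rw [hb1, mul_one] at hB
    rcases Nat.even_or_odd i with ⟨a2, ha2⟩ | ⟨a2, ha2⟩
    · -- i even : 5^i ≡ 1 mod 3, so 3 ∣ 2^(i+1)
      have m3 : 5^i % 3 = 1 := by
        rw [ha2, show a2+a2 = 2*a2 by ring, pow_mul]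
        simp [Nat.pow_mod]
      have hdvd3 : (3:ℕ) ∣ 2^(i+1) := by omega
      have := Nat.Prime.dvd_of_dvd_pow (by norm_num : Nat.Prime 3) hdvd3
      norm_num at this
    · -- i odd ≥ 3 : 5^i ≡ 5 mod 8, 2^(i+1) ≡ 0 mod 8
      have m8 : 5^i % 8 = 5 := by
        rw [ha2, pow_succ, pow_mul]
        simp [Nat.mul_mod, Nat.pow_mod]
      have split : (2:ℕ)^(i+1) = 8*2^(i-2) := by
        rw [show i+1 = 3+(i-2) by omega, pow_add]
        norm_num
      omega
  · -- both divide c+1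
    have hdvd : 2^(i+1) * 5^i ∣ c + 1 := hcop25.mul_dvd_of_dvd_of_dvd h2 h5
    have hle := Nat.le_of_dvd (by omega) hdvd
    nlinarith


/-- The only triangular numbers whose decimal representation consists of a single
repeated digit are 1, 3, 6, 55, 66, and 666. -/
theorem triangular_repdigit (k i d : ℕ) (hk : 0 < k) (hi : 0 < i)
    (hd1 : 1 ≤ d) (hd9 : d ≤ 9) :
    k * (k + 1) / 2 = d * (10 ^ i - 1) / 9 ↔
      (k, d, i) = (1, 1, 1) ∨ (k, d, i) = (2, 3, 1) ∨ (k, d, i) = (3, 6, 1) ∨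
      (k, d, i) = (10, 5, 2) ∨ (k, d, i) = (11, 6, 2) ∨ (k, d, i) = (36, 6, 3) := by

  constructor
  · intro h
    obtain ⟨P, hP⟩ : ∃ P, k*(k+1) = P + P := Nat.even_mul_succ_self k
    have hmod : 10^i % 9 = 1 := by simp [Nat.pow_mod]
    obtain ⟨Q, hQ⟩ : ∃ Q, 10^i = 9*Q + 1 := ⟨10^i / 9, by omega⟩
    have hL : k*(k+1)/2 = P := by omega
    have hR : d*(10^i - 1)/9 = d*Q := by
      have e : 10^i - 1 = 9*Q := by omega
      rw [e, show d*(9*Q) = 9*(d*Q) by ring, Nat.mul_div_cancel_left _ (by norm_num)]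
    rw [hL, hR] at h
    have hk2 : k*(k+1) = 2*(d*Q) := by omega
    by_cases hi3 : i ≤ 3
    · have h10 : 10^i ≤ 1000 := by
        calc (10:ℕ)^i ≤ 10^3 := Nat.pow_le_pow_right (by norm_num) hi3
        _ = 1000 := by norm_num
      have hQle : Q ≤ 111 := by omega
      have hdQ : d*Q ≤ 9*111 := Nat.mul_le_mul hd9 hQle
      have hk44 : k < 45 := by
        by_contra hc
        push_neg at hc
        have := Nat.mul_le_mul hc (show 46 ≤ k+1 by omega)
        omega
      have E : 9*(k*(k+1)) = 2*(d*(10^i - 1)) := by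
        have e : 10^i - 1 = 9*Q := by omega
        rw [e, hk2]
        ring
      have dec : ∀ k' ∈ Finset.range 45, ∀ d' ∈ Finset.range 10, ∀ i' ∈ Finset.range 4,
          (9*(k'*(k'+1)) = 2*(d'*(10^i'-1)) ∧ 1 ≤ k' ∧ 1 ≤ i' ∧ 1 ≤ d') →
          ((k'=1∧d'=1∧i'=1)∨(k'=2∧d'=3∧i'=1)∨(k'=3∧d'=6∧i'=1)∨(k'=10∧d'=5∧i'=2)∨(k'=11∧d'=6∧i'=2)∨(k'=36∧d'=6∧i'=3)) := by decide
      have := dec k (Finset.mem_range.mpr hk44) d (Finset.mem_range.mpr (by omega))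
        i (Finset.mem_range.mpr (by omega)) ⟨E, hk, hi, hd1⟩
      simp only [Prod.mk.injEq]
      tauto
    · exfalso
      push_neg at hi3
      have hM : (6*k+3)*(6*k+3) + 8*d = 8*(d*10^i) + 9 := by
        have e1 : (6*k+3)*(6*k+3) = 36*(k*(k+1)) + 9 := by ring
        rw [e1, hk2, hQ]
        ring
      interval_cases d
      · exact d1_large (6*k+3) i (by omega) (by omega)
      · exact easy_digit (6*k+3) 2 i (by omega) hM (by decide)
      · exact easy_digit (6*k+3) 3 i (by omega) hM (by decide)
      · exact easy_digit (6*k+3) 4 i (by omega) hM (by decide)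
      · exact d5_large (6*k+3) i (by omega) (by omega)
      · have h6 : 3*((2*k+1)*(2*k+1)) + 13 = 16*10^i := by
          have e : (6*k+3)*(6*k+3) = 9*((2*k+1)*(2*k+1)) := by ring
          omega
        exact d6_large (2*k+1) i (by omega) h6
      · exact easy_digit (6*k+3) 7 i (by omega) hM (by decide)
      · exact easy_digit (6*k+3) 8 i (by omega) hM (by decide)
      · exact easy_digit (6*k+3) 9 i (by omega) hM (by decide)
  · intro h
    rcases h with h|h|h|h|h|h <;>
      (simp only [Prod.mk.injEq] at h; obtain ⟨rfl, rfl, rfl⟩ := h; norm_num)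
end

section
/- For every positive integer i, the number 64·(10^i − 1)/9 + 1 is not a perfect square. -/
/-- Case d = 8: 64·(10^i − 1)/9 + 1 is never a perfect square. -/
theorem repdigit_eight_not_square (i : ℕ) (hi : 0 < i) :
    ¬ IsSquare (64 * (10 ^ i - 1) / 9 + 1) := by
  match i, hi with
  | 1, _ =>
    rintro ⟨m, hm⟩
    norm_num at hm
    have hm8 : m ≤ 8 := by nlinarith
    interval_cases m <;> omega
  | (k+2), _ =>
    rintro ⟨m, hm⟩
    have h9 : (9:ℕ) ∣ 10 ^ k - 1 := by
      simpa using Nat.sub_dvd_pow_sub_pow 10 1 k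
    obtain ⟨q, hq⟩ := h9
    have hpos : 1 ≤ (10:ℕ) ^ k := Nat.one_le_pow _ _ (by norm_num)
    have h10 : (10:ℕ) ^ k = 9 * q + 1 := by omega
    have hval : 64 * (10 ^ (k+2) - 1) / 9 + 1 = 6400 * q + 705 := by
      have h1 : (10:ℕ) ^ (k+2) = 100 * (9 * q + 1) := by
        rw [pow_add, h10]; ring
      have h2 : 64 * ((10:ℕ) ^ (k+2) - 1) = 9 * (6400 * q + 704) := by
        rw [h1]; omega
      rw [h2, Nat.mul_div_cancel_left _ (by norm_num : (0:ℕ) < 9)]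
    rw [hval] at hm
    have hc := congrArg (Nat.cast : ℕ → ZMod 100) hm
    push_cast at hc
    have hno : ∀ x : ZMod 100, x * x ≠ 5 := by decide
    have e1 : (6400 : ZMod 100) = 0 := by decide
    have e2 : (705 : ZMod 100) = 5 := by decide
    rw [e1, e2, zero_mul, zero_add] at hc
    exact hno m hc.symm
end

section
/- For every integer i ≥ 2, the number 24·(10^i − 1)/9 + 1 is not a perfect square. -/
lemma sq_mod_25_ne_15 (m : ℕ) : m * m % 25 ≠ 15 := by
  have h : m % 25 < 25 := Nat.mod_lt _ (by norm_num)
  have : m * m % 25 = (m % 25) * (m % 25) % 25 := by rw [Nat.mul_mod]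
  rw [this]
  interval_cases h : m % 25 <;> decide

/-- Case d = 3: for i ≥ 2, the number 24·(10^i − 1)/9 + 1 is not a perfect square. -/
theorem repdigit_three_not_square (i : ℕ) (hi : 2 ≤ i) :
    ¬ IsSquare (24 * (10 ^ i - 1) / 9 + 1) := by
  obtain ⟨k, rfl⟩ : ∃ k, i = k + 2 := ⟨i - 2, by omega⟩
  set t := (10 ^ k - 1) / 9 with ht
  have h9 : 10 ^ k - 1 = 9 * t := by
    have : 9 ∣ 10 ^ k - 1 := by
      have := Nat.sub_dvd_pow_sub_pow 10 1 k
      simpa using this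
    omega
  have hpow : (10:ℕ) ^ k ≥ 1 := Nat.one_le_pow _ _ (by norm_num)
  have hN : 24 * (10 ^ (k + 2) - 1) / 9 + 1 = 2400 * t + 265 := by
    have h1 : (10:ℕ) ^ (k + 2) = 100 * 10 ^ k := by ring
    have h2 : 10 ^ (k + 2) - 1 = 900 * t + 99 := by
      rw [h1]; omega
    rw [h2]
    omega
  rw [hN]
  rintro ⟨m, hm⟩
  have : (2400 * t + 265) % 25 = 15 := by omega
  rw [hm] at this
  exact sq_mod_25_ne_15 m this
end

section
/- For every positive integer n there exists an integer p such that p^2 ≡ 8·(10^n − 1)/9 + 1 (mod 10^n); in other words, there exist perfect squares whose decimal representation ends in the digit 9 preceded by an arbitrarily long string of digits 8. -/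
/-- For every positive integer n there is an integer p with
p^2 ≡ 8·(10^n − 1)/9 + 1 (mod 10^n): squares can end in arbitrarily many 8s followed by a 9. -/
theorem squares_ending_in_many_eights (n : ℕ) (hn : 0 < n) :
    ∃ p : ℤ, p ^ 2 ≡ 8 * ((10 ^ n - 1) / 9) + 1 [ZMOD (10 : ℤ) ^ n] := by
  -- 9 divides 10^n - 1
  have h9 : (9 : ℤ) ∣ 10 ^ n - 1 := by
    have : (10 : ℤ) ^ n ≡ 1 ^ n [ZMOD 9] := Int.ModEq.pow n (by decide)
    have := (Int.ModEq.dvd this)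
    simpa using this.neg_right.neg_left
  -- CRT: find y ≡ 1 mod 2^n, y ≡ 5^n - 1 mod 5^n
  have h25 : Nat.Coprime (2 ^ n) (5 ^ n) :=
    Nat.Coprime.pow n n (by norm_num)
  obtain ⟨y, hy1, hy2⟩ := Nat.chineseRemainder h25 1 (5 ^ n - 1)
  -- CRT: find x ≡ 0 mod 3, x ≡ y mod 2^n*5^n
  have h3 : Nat.Coprime 3 (2 ^ n * 5 ^ n) :=
    Nat.Coprime.mul_right (Nat.Coprime.pow_right _ (by decide))
      (Nat.Coprime.pow_right _ (by decide))
  obtain ⟨x, hx3, hxy⟩ := Nat.chineseRemainder h3 0 y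
  set X : ℤ := (x : ℤ) with hX
  have h3X : (3 : ℤ) ∣ X := by
    have := (Nat.modEq_iff_dvd (n := 3)).mp hx3
    simpa [hX] using this.neg_right.neg_left.neg_right
  have hxy2 : x ≡ y [MOD 2 ^ n] := (Nat.ModEq.of_mul_right _ hxy)
  have hxy5 : x ≡ y [MOD 5 ^ n] := (Nat.ModEq.of_mul_left _ hxy)
  have hx2 : x ≡ 1 [MOD 2 ^ n] := hxy2.trans hy1
  have hx5 : x ≡ 5 ^ n - 1 [MOD 5 ^ n] := hxy5.trans hy2
  -- translate to ℤ
  have h2d : ((2 : ℤ) ^ n) ∣ X - 1 := by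
    have := (Nat.modEq_iff_dvd (n := 2 ^ n)).mp hx2
    have := this.neg_right.neg_left
    push_cast at this ⊢
    simpa [neg_sub] using this
  have h5d : ((5 : ℤ) ^ n) ∣ X + 1 := by
    have hd := (Nat.modEq_iff_dvd (n := 5 ^ n)).mp hx5
    have h5pos : (1 : ℕ) ≤ 5 ^ n := Nat.one_le_pow _ _ (by norm_num)
    have : ((5 : ℤ) ^ n) ∣ ((5 ^ n - 1 : ℕ) : ℤ) - X := by
      push_cast at hd ⊢
      exact hd
    have hcast : ((5 ^ n - 1 : ℕ) : ℤ) = (5 : ℤ) ^ n - 1 := by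
      push_cast [h5pos]
      ring
    rw [hcast] at this
    obtain ⟨k, hk⟩ := this
    exact ⟨1 - k, by linarith⟩
  -- 10^n divides X^2 - 1
  have h10d : ((10 : ℤ) ^ n) ∣ X ^ 2 - 1 := by
    have : ((2 : ℤ) ^ n * 5 ^ n) ∣ (X - 1) * (X + 1) := mul_dvd_mul h2d h5d
    have h10 : (10 : ℤ) ^ n = 2 ^ n * 5 ^ n := by
      rw [← mul_pow]; norm_num
    rw [h10]
    calc (2 : ℤ) ^ n * 5 ^ n ∣ (X - 1) * (X + 1) := this
      _ = X ^ 2 - 1 := by ring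
  -- let p = X / 3
  obtain ⟨p, hp⟩ := h3X
  refine ⟨p, ?_⟩
  set t : ℤ := 8 * ((10 ^ n - 1) / 9) + 1 with ht
  have h9t : 9 * t = 8 * 10 ^ n + 1 := by
    rw [ht]
    have : (9 : ℤ) * ((10 ^ n - 1) / 9) = 10 ^ n - 1 := Int.mul_ediv_cancel' h9
    ring_nf
    ring_nf at this
    omega
  -- 9 divides X^2 - 1 - 8*10^n
  have h9d : (9 : ℤ) ∣ X ^ 2 - 1 - 8 * 10 ^ n := by
    have h1 : (9 : ℤ) ∣ X ^ 2 := by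
      rw [hp]; exact ⟨p ^ 2, by ring⟩
    have h2 : (9 : ℤ) ∣ 8 * 10 ^ n + 1 := by
      obtain ⟨k, hk⟩ := h9
      exact ⟨8 * k + 1, by linarith⟩
    obtain ⟨a, ha⟩ := h1
    obtain ⟨b, hb⟩ := h2
    exact ⟨a - b, by linarith⟩
  have h10d' : ((10 : ℤ) ^ n) ∣ X ^ 2 - 1 - 8 * 10 ^ n :=
    dvd_sub h10d ⟨8, by ring⟩
  -- coprime 9 and 10^n
  have hco : IsCoprime (9 : ℤ) ((10 : ℤ) ^ n) := by
    have : IsCoprime (9 : ℤ) (10 : ℤ) := by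
      rw [Int.isCoprime_iff_gcd_eq_one]; decide
    exact this.pow_right
  have hbig : (9 : ℤ) * 10 ^ n ∣ X ^ 2 - 1 - 8 * 10 ^ n :=
    hco.mul_dvd h9d h10d'
  -- conclude
  have key : ((10 : ℤ) ^ n) ∣ p ^ 2 - t := by
    have h9eq : (9 : ℤ) * (p ^ 2 - t) = X ^ 2 - 1 - 8 * 10 ^ n := by
      rw [hp] at *
      have := h9t
      ring_nf
      ring_nf at this
      nlinarith [this]
    have : (9 : ℤ) * 10 ^ n ∣ 9 * (p ^ 2 - t) := by rw [h9eq]; exact hbig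
    exact (mul_dvd_mul_iff_left (by norm_num : (9 : ℤ) ≠ 0)).mp this
  have := key
  rw [Int.modEq_iff_dvd]
  simpa [neg_sub] using this.neg_right.neg_left
end

section
/- Every solution in positive integers (x, y) of the Pell equation x^2 − 2y^2 = 1 satisfies: 5 divides y if and only if 7 divides y. Consequently, there is no solution with y = 2·10^r for an integer r ≥ 1. -/
/-- The orbit of (3,2) mod 35 under the Pell recurrence. -/
def PellOrb (x y : ℤ) : Prop :=
  ((x : ZMod 35) = 3 ∧ (y : ZMod 35) = 2) ∨
  ((x : ZMod 35) = 17 ∧ (y : ZMod 35) = 12) ∨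
  ((x : ZMod 35) = 29 ∧ (y : ZMod 35) = 0) ∨
  ((x : ZMod 35) = 17 ∧ (y : ZMod 35) = 23) ∨
  ((x : ZMod 35) = 3 ∧ (y : ZMod 35) = 33) ∨
  ((x : ZMod 35) = 1 ∧ (y : ZMod 35) = 0)

lemma pell_orbit : ∀ (n : ℕ) (x y : ℤ), y = (n : ℤ) → 0 < x → 0 < y →
    x ^ 2 - 2 * y ^ 2 = 1 → PellOrb x y := by
  intro n
  induction n using Nat.strong_induction_on with
  | _ n ih =>
    intro x y hyn hx hy h
    have hy1 : y ≠ 1 := by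
      intro h1
      subst h1
      have hxle : x ≤ 1 := by nlinarith [sq_nonneg (x - 2)]
      have : x = 1 := le_antisymm hxle hx
      subst this
      norm_num at h
    by_cases hy2 : y ≤ 2
    · have hy2' : y = 2 := by omega
      subst hy2'
      have hx3 : x = 3 := by nlinarith [sq_nonneg (x - 3), sq_nonneg (x + 3)]
      subst hx3
      left
      constructor <;> norm_num
    · push_neg at hy2
      set x' := 3 * x - 4 * y with hx'def
      set y' := 3 * y - 2 * x with hy'def
      have hx' : 0 < x' := by nlinarith
      have hy' : 0 < y' := by nlinarith
      have hyx : y < x := by nlinarith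
      have hlt : y' < y := by omega
      have h' : x' ^ 2 - 2 * y' ^ 2 = 1 := by linear_combination h
      have hmem := ih y'.toNat (by omega) x' y' (by omega) hx' hy' h'
      have hxeq : x = 3 * x' + 4 * y' := by ring
      have hyeq : y = 2 * x' + 3 * y' := by ring
      have hxc : (x : ZMod 35) = 3 * (x' : ZMod 35) + 4 * (y' : ZMod 35) := by
        rw [hxeq]; push_cast; ring
      have hyc : (y : ZMod 35) = 2 * (x' : ZMod 35) + 3 * (y' : ZMod 35) := by
        rw [hyeq]; push_cast; ring
      rcases hmem with ⟨ha, hb⟩ | ⟨ha, hb⟩ | ⟨ha, hb⟩ | ⟨ha, hb⟩ | ⟨ha, hb⟩ | ⟨ha, hb⟩ <;>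
        rw [ha, hb] at hxc hyc <;> (unfold PellOrb; rw [hxc, hyc]; decide)

lemma sub35 (y c : ℤ) (hb : (y : ZMod 35) = (c : ZMod 35)) : (35 : ℤ) ∣ y - c := by
  have h0 : ((y - c : ℤ) : ZMod 35) = 0 := by push_cast; rw [hb]; ring
  exact_mod_cast (ZMod.intCast_zmod_eq_zero_iff_dvd _ 35).mp h0

/-- Every positive solution of x^2 − 2y^2 = 1 satisfies 5 ∣ y ↔ 7 ∣ y; hence no
solution has y = 2·10^r with r ≥ 1. -/
theorem pell_two_div_iff (x y : ℤ) (hx : 0 < x) (hy : 0 < y)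
    (h : x ^ 2 - 2 * y ^ 2 = 1) :
    (5 ∣ y ↔ 7 ∣ y) ∧ ∀ r : ℕ, 1 ≤ r → y ≠ 2 * 10 ^ r := by
  have horb := pell_orbit y.toNat x y (by omega) hx hy h
  have hiff : (5 ∣ y ↔ 7 ∣ y) := by
    rcases horb with ⟨_, hb⟩ | ⟨_, hb⟩ | ⟨_, hb⟩ | ⟨_, hb⟩ | ⟨_, hb⟩ | ⟨_, hb⟩
    · have h35 := sub35 y 2 (by rw [hb]; norm_cast)
      constructor <;> (intro _; omega)
    · have h35 := sub35 y 12 (by rw [hb]; norm_cast)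
      constructor <;> (intro _; omega)
    · have h35 := sub35 y 0 (by rw [hb]; norm_cast)
      constructor <;> (intro _; omega)
    · have h35 := sub35 y 23 (by rw [hb]; norm_cast)
      constructor <;> (intro _; omega)
    · have h35 := sub35 y 33 (by rw [hb]; norm_cast)
      constructor <;> (intro _; omega)
    · have h35 := sub35 y 0 (by rw [hb]; norm_cast)
      constructor <;> (intro _; omega)
  refine ⟨hiff, ?_⟩
  intro r hr hEq
  have h5 : (5 : ℤ) ∣ y := by
    rw [hEq]
    exact Dvd.dvd.mul_left (dvd_pow (by norm_num) (by omega)) 2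
  have h7 : (7 : ℤ) ∣ y := hiff.mp h5
  rw [hEq] at h7
  have hp : Prime (7 : ℤ) := by norm_num
  rcases hp.dvd_mul.mp h7 with hd | hd
  · norm_num at hd
  · have := hp.dvd_of_dvd_pow hd
    norm_num at this
end

section
/- Every solution in positive integers (x, y) of the Pell equation x^2 − 20y^2 = 1 satisfies: 5 divides y if and only if 11 divides y. Consequently, there is no solution with y = 2·10^r for an integer r ≥ 1. -/
/-- The orbit of (9,2) mod 55 under the Pell recursion. -/
def pellOrbit : List (ZMod 55 × ZMod 55) :=
  [(9, 2), (51, 36), (29, 41), (31, 42), (34, 0), (31, 13), (29, 14), (51, 19), (9, 53), (1, 0)]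

lemma pell_orbit_aux : ∀ n : ℕ, ∀ x y : ℤ, 0 < x → 0 < y → y.toNat ≤ n →
    x ^ 2 - 20 * y ^ 2 = 1 → ((x : ZMod 55), (y : ZMod 55)) ∈ pellOrbit := by
  intro n
  induction n with
  | zero => intro x y hx hy hn _; omega
  | succ n ih =>
    intro x y hx hy hn h
    have hy1 : y ≠ 1 := by
      intro h1
      subst h1
      have h4 : x ≤ 4 ∨ 5 ≤ x := by omega
      rcases h4 with h4 | h4 <;> nlinarith
    rcases (by omega : y = 2 ∨ 3 ≤ y) with h2 | h3
    · subst h2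
      have hx9 : x = 9 := by
        have h9 : (x - 9) * (x + 9) = 0 := by nlinarith
        rcases mul_eq_zero.mp h9 with h' | h' <;> omega
      subst hx9
      norm_num [pellOrbit]
    · -- descent step
      set x' : ℤ := 9 * x - 40 * y with hx'def
      set y' : ℤ := 9 * y - 2 * x with hy'def
      have h' : x' ^ 2 - 20 * y' ^ 2 = 1 := by rw [hx'def, hy'def]; linear_combination h
      have hx'pos : 0 < x' := by
        rw [hx'def]
        nlinarith [sq_nonneg (9 * x - 40 * y), mul_pos hx hy]
      have hy'pos : 0 < y' := by
        rw [hy'def]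
        nlinarith [sq_nonneg (9 * y - 2 * x), mul_pos hx hy]
      have hlt : y' < y := by
        rw [hy'def]
        nlinarith [mul_pos hx hy]
      have hmem := ih x' y' hx'pos hy'pos (by omega) h'
      have hxe : (x : ZMod 55) = 9 * (x' : ZMod 55) + 40 * (y' : ZMod 55) := by
        have : x = 9 * x' + 40 * y' := by rw [hx'def, hy'def]; ring
        rw [this]; push_cast; ring
      have hye : (y : ZMod 55) = 2 * (x' : ZMod 55) + 9 * (y' : ZMod 55) := by
        have : y = 2 * x' + 9 * y' := by rw [hx'def, hy'def]; ring
        rw [this]; push_cast; ring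
      rw [hxe, hye]
      simp only [pellOrbit, List.mem_cons, List.not_mem_nil, or_false, Prod.mk.injEq] at hmem ⊢
      rcases hmem with ⟨h1, h2⟩ | ⟨h1, h2⟩ | ⟨h1, h2⟩ | ⟨h1, h2⟩ | ⟨h1, h2⟩ | ⟨h1, h2⟩ |
        ⟨h1, h2⟩ | ⟨h1, h2⟩ | ⟨h1, h2⟩ | ⟨h1, h2⟩ <;> rw [h1, h2] <;> decide

/-- Every positive solution of x^2 − 20y^2 = 1 satisfies 5 ∣ y ↔ 11 ∣ y; hence no
solution has y = 2·10^r with r ≥ 1. -/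
theorem pell_twenty_div_iff (x y : ℤ) (hx : 0 < x) (hy : 0 < y)
    (h : x ^ 2 - 20 * y ^ 2 = 1) :
    (5 ∣ y ↔ 11 ∣ y) ∧ ∀ r : ℕ, 1 ≤ r → y ≠ 2 * 10 ^ r := by
  have hmem := pell_orbit_aux y.toNat x y hx hy le_rfl h
  have hiff : (5 ∣ y ↔ 11 ∣ y) := by
    simp only [pellOrbit, List.mem_cons, List.not_mem_nil, or_false, Prod.mk.injEq] at hmem
    have key : ∀ c : ℤ, (y : ZMod 55) = (c : ℤ) → (55 : ℤ) ∣ y - c := by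
      intro c hc
      have : ((y - c : ℤ) : ZMod 55) = 0 := by push_cast; rw [hc]; ring
      exact_mod_cast (ZMod.intCast_zmod_eq_zero_iff_dvd _ 55).mp this
    rcases hmem with ⟨_, h2⟩ | ⟨_, h2⟩ | ⟨_, h2⟩ | ⟨_, h2⟩ | ⟨_, h2⟩ | ⟨_, h2⟩ |
      ⟨_, h2⟩ | ⟨_, h2⟩ | ⟨_, h2⟩ | ⟨_, h2⟩
    · have := key 2 (by exact_mod_cast h2); omega
    · have := key 36 (by exact_mod_cast h2); omega
    · have := key 41 (by exact_mod_cast h2); omega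
    · have := key 42 (by exact_mod_cast h2); omega
    · have := key 0 (by exact_mod_cast h2); omega
    · have := key 13 (by exact_mod_cast h2); omega
    · have := key 14 (by exact_mod_cast h2); omega
    · have := key 19 (by exact_mod_cast h2); omega
    · have := key 53 (by exact_mod_cast h2); omega
    · have := key 0 (by exact_mod_cast h2); omega
  refine ⟨hiff, ?_⟩
  intro r hr heq
  obtain ⟨s, rfl⟩ := Nat.exists_eq_add_of_le hr
  have h5 : (5 : ℤ) ∣ y := by
    rw [heq]
    exact ⟨4 * 10 ^ s, by ring⟩
  have h11 : (11 : ℤ) ∣ y := hiff.mp h5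
  rw [heq] at h11
  have hp : Prime (11 : ℤ) := by norm_num
  rcases hp.dvd_mul.mp h11 with hd | hd
  · norm_num at hd
  · have : (11 : ℤ) ∣ 10 := hp.dvd_of_dvd_pow hd
    norm_num at this
end

section
/- There are no positive integers p and i with i ≥ 2 such that (3p)^2 − 8·10^i = 1; equivalently, 9p^2 = 8·10^i + 1 has no solution in positive integers p when i ≥ 2. -/
private lemma pow_dvd_consec {q n b : ℕ} (hq : q.Prime) (h : q ^ n ∣ b * (b + 1)) :
    q ^ n ∣ b ∨ q ^ n ∣ (b + 1) := by
  by_cases hd : q ∣ b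
  · left
    have hnd : ¬ q ∣ (b + 1) := by
      intro hd1
      have h1 : q ∣ 1 := by
        have := Nat.dvd_sub hd1 hd
        simpa using this
      exact Nat.Prime.one_lt hq |>.ne' (Nat.eq_one_of_dvd_one h1)
    exact (((Nat.Prime.coprime_iff_not_dvd hq).2 hnd).pow_left n).dvd_of_dvd_mul_right h
  · right
    exact (((Nat.Prime.coprime_iff_not_dvd hq).2 hd).pow_left n).dvd_of_dvd_mul_left h

private lemma not_five_pow_eq (i : ℕ) (hi : 2 ≤ i) : 5 ^ i ≠ 2 ^ (i + 1) + 1 := by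
  intro heq
  rcases Nat.even_or_odd i with ⟨k, hk⟩ | ⟨k, hk⟩
  · -- i = k + k, work mod 3
    have h3 : (5 : ZMod 3) ^ i = 2 ^ (i + 1) + 1 := by
      exact_mod_cast congrArg (Nat.cast : ℕ → ZMod 3) heq
    subst hk
    have e1 : (5 : ZMod 3) ^ (k + k) = 1 := by
      rw [← two_mul, pow_mul]
      have : (5 : ZMod 3) ^ 2 = 1 := by decide
      rw [this, one_pow]
    have e2 : (2 : ZMod 3) ^ (k + k + 1) = 2 := by
      rw [pow_succ, ← two_mul, pow_mul]
      have : (2 : ZMod 3) ^ 2 = 1 := by decide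
      rw [this, one_pow, one_mul]
    rw [e1, e2] at h3
    exact absurd h3 (by decide)
  · -- i = 2k+1, k ≥ 1, work mod 8
    have hk1 : 1 ≤ k := by omega
    have h8 : (5 : ZMod 8) ^ i = 2 ^ (i + 1) + 1 := by
      exact_mod_cast congrArg (Nat.cast : ℕ → ZMod 8) heq
    obtain ⟨m, hm⟩ : ∃ m, i + 1 = 3 + m := ⟨i - 2, by omega⟩
    have e2 : (2 : ZMod 8) ^ (i + 1) = 0 := by
      rw [hm, pow_add]
      have : (2 : ZMod 8) ^ 3 = 0 := by decide
      rw [this, zero_mul]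
    have e1 : (5 : ZMod 8) ^ i = 5 := by
      rw [hk, pow_succ, pow_mul]
      have : (5 : ZMod 8) ^ 2 = 1 := by decide
      rw [this, one_pow, one_mul]
    rw [e1, e2] at h8
    exact absurd h8 (by decide)

/-- There are no positive integers p, i with i ≥ 2 and (3p)^2 = 8·10^i + 1. -/
theorem no_solution_nine_p_sq (p i : ℕ) (hp : 0 < p) (hi : 2 ≤ i) :
    (3 * p) ^ 2 ≠ 8 * 10 ^ i + 1 := by
  intro h
  -- 3p is odd
  have hmod : (3 * p) % 2 = 1 := by
    have h2 : ((3 * p) ^ 2) % 2 = 1 := by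
      rw [h]
      have : 10 ^ i % 2 = 0 := by
        have : (2 : ℕ) ∣ 10 ^ i := dvd_pow (by norm_num) (by omega)
        omega
      omega
    rw [Nat.pow_mod] at h2
    rcases Nat.mod_two_eq_zero_or_one (3 * p) with hh | hh <;> rw [hh] at h2 <;> simp_all
  obtain ⟨b, hb⟩ : ∃ b, 3 * p = 2 * b + 1 := ⟨(3 * p) / 2, by omega⟩
  have hb1 : 1 ≤ b := by omega
  -- b(b+1) = 2^(i+1) * 5^i
  have h10 : (10 : ℕ) ^ i = 2 ^ i * 5 ^ i := by rw [← Nat.mul_pow]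
  have hkey : b * (b + 1) = 2 ^ (i + 1) * 5 ^ i := by
    have expand : 4 * (b * (b + 1)) + 1 = 8 * (2 ^ i * 5 ^ i) + 1 := by
      rw [← h10, ← h, hb]; ring
    have : b * (b + 1) = 2 * (2 ^ i * 5 ^ i) := by omega
    rw [this, pow_succ]; ring
  have hfive : (5 : ℕ) ^ i ∣ b ∨ (5 : ℕ) ^ i ∣ (b + 1) :=
    pow_dvd_consec (by norm_num) ⟨2 ^ (i + 1), by rw [hkey]; ring⟩
  have htwo : (2 : ℕ) ^ (i + 1) ∣ b ∨ (2 : ℕ) ^ (i + 1) ∣ (b + 1) :=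
    pow_dvd_consec (by norm_num) ⟨5 ^ i, hkey⟩
  have hcop : Nat.Coprime (2 ^ (i + 1)) (5 ^ i) :=
    Nat.Coprime.pow _ _ (by decide : Nat.Coprime 2 5)
  have hpos : 0 < 2 ^ (i + 1) * 5 ^ i := by positivity
  have hsize : (8 : ℕ) * 25 ≤ 2 ^ (i + 1) * 5 ^ i := by
    have h1 : (2 : ℕ) ^ 3 ≤ 2 ^ (i + 1) := Nat.pow_le_pow_right (by norm_num) (by omega)
    have h2 : (5 : ℕ) ^ 2 ≤ 5 ^ i := Nat.pow_le_pow_right (by norm_num) hi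
    calc (8 : ℕ) * 25 = 2 ^ 3 * 5 ^ 2 := by norm_num
      _ ≤ 2 ^ (i + 1) * 5 ^ i := Nat.mul_le_mul h1 h2
  rcases htwo with h2b | h2b <;> rcases hfive with h5b | h5b
  · -- both divide b: impossible
    have hd : 2 ^ (i + 1) * 5 ^ i ∣ b := hcop.mul_dvd_of_dvd_of_dvd h2b h5b
    have hle := Nat.le_of_dvd (by omega) hd
    nlinarith [hkey, hb1]
  · -- b = 2^(i+1), b+1 = 5^i
    obtain ⟨x, hx⟩ := h2b
    obtain ⟨y, hy⟩ := h5b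
    have h1 : 2 ^ (i + 1) * 5 ^ i * (x * y) = b * (b + 1) := by rw [hy, hx]; ring
    rw [hkey] at h1
    have hxy : x * y = 1 :=
      Nat.eq_of_mul_eq_mul_left hpos (h1.trans (mul_one _).symm)
    have hx1 : x = 1 := Nat.dvd_one.mp ⟨y, hxy.symm⟩
    have hy1 : y = 1 := Nat.dvd_one.mp ⟨x, ((mul_comm x y) ▸ hxy).symm⟩
    rw [hx1, mul_one] at hx
    rw [hy1, mul_one] at hy
    exact not_five_pow_eq i hi (by omega)
  · -- b = 5^i, b+1 = 2^(i+1) : size contradiction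
    obtain ⟨x, hx⟩ := h5b
    obtain ⟨y, hy⟩ := h2b
    have h1 : 2 ^ (i + 1) * 5 ^ i * (x * y) = b * (b + 1) := by rw [hy, hx]; ring
    rw [hkey] at h1
    have hxy : x * y = 1 :=
      Nat.eq_of_mul_eq_mul_left hpos (h1.trans (mul_one _).symm)
    have hx1 : x = 1 := Nat.dvd_one.mp ⟨y, hxy.symm⟩
    have hy1 : y = 1 := Nat.dvd_one.mp ⟨x, ((mul_comm x y) ▸ hxy).symm⟩
    rw [hx1, mul_one] at hx
    rw [hy1, mul_one] at hy
    -- 2^(i+1) = 5^i + 1 but 2^(i+1) ≤ 4^i < 5^i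
    have hA : (2 : ℕ) ^ (i + 1) ≤ 2 ^ (2 * i) := Nat.pow_le_pow_right (by norm_num) (by omega)
    have hB : (2 : ℕ) ^ (2 * i) = 4 ^ i := by rw [pow_mul]; norm_num
    have hC : (4 : ℕ) ^ i < 5 ^ i := Nat.pow_lt_pow_left (by norm_num) (by omega)
    omega
  · -- both divide b+1: impossible
    have hd : 2 ^ (i + 1) * 5 ^ i ∣ (b + 1) := hcop.mul_dvd_of_dvd_of_dvd h2b h5b
    have hle := Nat.le_of_dvd (by omega) hd
    nlinarith [hkey, hb1, hsize]
end

section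
/- For a positive integer i, the number 40·(10^i − 1)/9 + 1 is a perfect square if and only if i = 2. -/
/-- Residue states (x mod 28, w mod 28) reachable for solutions of x² + 31 = 40 w². -/
def repdigitFiveR : List (ZMod 28 × ZMod 28) :=
  [(3, 1), (3, 27), (5, 0), (7, 10), (7, 18), (9, 0), (11, 13), (11, 15),
   (17, 13), (17, 15), (19, 0), (21, 10), (21, 18), (23, 0), (25, 1), (25, 27)]

lemma repdigitFiveR_closed (p : ZMod 28 × ZMod 28) (hp : p ∈ repdigitFiveR) :
    (19 * p.1 + 120 * p.2, 3 * p.1 + 19 * p.2) ∈ repdigitFiveR ∧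
      (120 * p.2 - 19 * p.1, 19 * p.2 - 3 * p.1) ∈ repdigitFiveR := by
  fin_cases hp <;> decide

/-- Key descent lemma: any natural solution of x² + 31 = 40 w² has its residues in the list. -/
lemma repdigitFive_key : ∀ w x : ℕ, x ^ 2 + 31 = 40 * w ^ 2 →
    ((x : ZMod 28), (w : ZMod 28)) ∈ repdigitFiveR := by
  intro w
  induction w using Nat.strong_induction_on with
  | _ w ih =>
    intro x hx
    by_cases hw : w ≤ 2
    · interval_cases w
      · exfalso; omega
      · -- x² = 9, so x = 3
        have hx3 : x ≤ 3 := by nlinarith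
        interval_cases x <;> first | (exfalso; omega) | (norm_num; decide)
      · -- x² = 129, impossible
        have hx12 : x ≤ 12 := by nlinarith
        interval_cases x <;> omega
    · push_neg at hw
      have hw3 : 3 ≤ w := hw
      -- bounds: 6w < x and 3x < 19w
      have hw2 : 9 ≤ w ^ 2 := by nlinarith
      have hb1 : 6 * w < x := by
        by_contra hc
        push_neg at hc
        have : x ^ 2 ≤ (6 * w) ^ 2 := Nat.pow_le_pow_left hc 2
        nlinarith
      have hb2 : 3 * x < 19 * w := by
        by_contra hc
        push_neg at hc
        have : (19 * w) ^ 2 ≤ (3 * x) ^ 2 := Nat.pow_le_pow_left hc 2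
        nlinarith
      set w' : ℕ := 19 * w - 3 * x with hw'
      have hw'w : w' < w := by omega
      by_cases hs : 120 * w ≤ 19 * x
      · -- x' = 19x - 120w
        set x' : ℕ := 19 * x - 120 * w with hx'
        have heq : x' ^ 2 + 31 = 40 * w' ^ 2 := by
          have h1 : (x' : ℤ) = 19 * x - 120 * w := by
            simp only [hx']; push_cast [Nat.cast_sub hs]; ring
          have h2 : (w' : ℤ) = 19 * w - 3 * x := by
            simp only [hw']; push_cast [Nat.cast_sub (le_of_lt hb2)]; ring
          have hxZ : (x : ℤ) ^ 2 + 31 = 40 * (w : ℤ) ^ 2 := by exact_mod_cast hx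
          have : (x' : ℤ) ^ 2 + 31 = 40 * (w' : ℤ) ^ 2 := by
            rw [h1, h2]; ring_nf; linarith [hxZ]
          exact_mod_cast this
        have hmem := ih w' hw'w x' heq
        have hxid : x = 19 * x' + 120 * w' := by omega
        have hwid : w = 3 * x' + 19 * w' := by omega
        have := (repdigitFiveR_closed _ hmem).1
        rw [hxid, hwid]
        push_cast
        exact this
      · -- x' = 120w - 19x
        push_neg at hs
        set x' : ℕ := 120 * w - 19 * x with hx'
        have hs' : 19 * x ≤ 120 * w := le_of_lt hs
        have heq : x' ^ 2 + 31 = 40 * w' ^ 2 := by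
          have h1 : (x' : ℤ) = 120 * w - 19 * x := by
            simp only [hx']; push_cast [Nat.cast_sub hs']; ring
          have h2 : (w' : ℤ) = 19 * w - 3 * x := by
            simp only [hw']; push_cast [Nat.cast_sub (le_of_lt hb2)]; ring
          have hxZ : (x : ℤ) ^ 2 + 31 = 40 * (w : ℤ) ^ 2 := by exact_mod_cast hx
          have : (x' : ℤ) ^ 2 + 31 = 40 * (w' : ℤ) ^ 2 := by
            rw [h1, h2]; ring_nf; linarith [hxZ]
          exact_mod_cast this
        have hmem := ih w' hw'w x' heq
        have hxid : x + 19 * x' = 120 * w' := by omega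
        have hwid : w + 3 * x' = 19 * w' := by omega
        have hcl := (repdigitFiveR_closed _ hmem).2
        have hxz : (x : ZMod 28) = 120 * (w' : ZMod 28) - 19 * (x' : ZMod 28) := by
          have : ((x + 19 * x' : ℕ) : ZMod 28) = ((120 * w' : ℕ) : ZMod 28) := by
            rw [hxid]
          push_cast at this
          linear_combination this
        have hwz : (w : ZMod 28) = 19 * (w' : ZMod 28) - 3 * (x' : ZMod 28) := by
          have : ((w + 3 * x' : ℕ) : ZMod 28) = ((19 * w' : ℕ) : ZMod 28) := by
            rw [hwid]
          push_cast at this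
          linear_combination this
        rw [hxz, hwz]
        exact hcl

lemma repdigitFive_pow10 : ∀ j : ℕ,
    (10 : ZMod 28) ^ (j + 2) ∈ ([16, 20, 4, 12, 8, 24] : List (ZMod 28)) := by
  intro j
  induction j with
  | zero => decide
  | succ n ihn =>
    have h : (10 : ZMod 28) ^ (n + 1 + 2) = 10 * (10 : ZMod 28) ^ (n + 2) := by ring
    rw [h]
    simp only [List.mem_cons, List.mem_singleton, List.not_mem_nil, or_false] at ihn ⊢
    rcases ihn with h1 | h1 | h1 | h1 | h1 | h1 <;> rw [h1] <;> decide

lemma repdigitFiveR_avoids (p : ZMod 28 × ZMod 28) (hp : p ∈ repdigitFiveR) :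
    p.2 ∉ ([16, 20, 4, 12, 8, 24] : List (ZMod 28)) := by
  fin_cases hp <;> decide

/-- Case d = 5: 40·(10^i − 1)/9 + 1 is a perfect square iff i = 2. -/
theorem repdigit_five_square_iff (i : ℕ) (hi : 0 < i) :
    IsSquare (40 * (10 ^ i - 1) / 9 + 1) ↔ i = 2 := by
  constructor
  · intro hsq
    -- write 10^i = 9q + 1
    obtain ⟨q, hq⟩ : ∃ q, 10 ^ i = 9 * q + 1 := by
      clear hi hsq
      induction i with
      | zero => exact ⟨0, rfl⟩
      | succ n ihn =>
        obtain ⟨q, hq⟩ := ihn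
        exact ⟨10 * q + 1, by rw [pow_succ, hq]; ring⟩
    have hN : 40 * (10 ^ i - 1) / 9 + 1 = 40 * q + 1 := by
      have h1 : 10 ^ i - 1 = 9 * q := by omega
      rw [h1]
      omega
    rw [hN] at hsq
    obtain ⟨m, hm⟩ := hsq
    -- (3m)² + 31 = 40·10^i
    have hkey : (3 * m) ^ 2 + 31 = 40 * 10 ^ i := by
      have : (3 * m) ^ 2 = 9 * (m * m) := by ring
      rw [this, ← hm, hq]; ring
    rcases Nat.even_or_odd i with he | ho
    · -- i = 2j even
      obtain ⟨j, hj⟩ := he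
      have hj1 : 1 ≤ j := by omega
      have hkey2 : (3 * m) ^ 2 + 31 = 40 * (10 ^ j) ^ 2 := by
        rw [hkey, hj, ← pow_mul]
        ring_nf
      by_contra hne
      have hj2 : 2 ≤ j := by omega
      have hmem := repdigitFive_key (10 ^ j) (3 * m) hkey2
      have havoid := repdigitFiveR_avoids _ hmem
      apply havoid
      have hcast : ((10 ^ j : ℕ) : ZMod 28) = (10 : ZMod 28) ^ j := by push_cast; ring
      simp only [hcast]
      obtain ⟨k, hk⟩ : ∃ k, j = k + 2 := ⟨j - 2, by omega⟩
      rw [hk]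
      exact repdigitFive_pow10 k
    · -- i = 2j+1 odd: z² - x² = 31 with z = 20·10^j ≥ 20, impossible
      obtain ⟨j, hj⟩ := ho
      set x := 3 * m
      set z := 20 * 10 ^ j with hz
      have h10 : (10 : ℕ) ^ (2 * j) = (10 ^ j) ^ 2 := by
        rw [two_mul, pow_add, pow_two]
      have hzz : x ^ 2 + 31 = z ^ 2 := by
        rw [hkey, hj, pow_succ, h10, hz]
        ring
      have hz20 : 20 ≤ z := by
        have : 1 ≤ 10 ^ j := Nat.one_le_pow _ _ (by norm_num)
        simp only [hz]; omega
      have hxz : x < z := by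
        by_contra hc
        push_neg at hc
        have : z ^ 2 ≤ x ^ 2 := Nat.pow_le_pow_left hc 2
        omega
      have h31 : 2 * x + 1 ≤ 31 := by
        have h1 : (x + 1) ^ 2 ≤ z ^ 2 := Nat.pow_le_pow_left (by omega) 2
        nlinarith
      have : z ^ 2 ≤ 256 := by nlinarith
      nlinarith
  · rintro rfl
    exact ⟨21, by norm_num⟩
end

section
/- Every solution in positive integers (x, y) of the equation x^2 − 10y^2 = −31 is obtained from one of the two starting solutions (x_0, y_0) = (3, 2) or (x_0, y_0) = (63, 20) by iterating the recursion x_{n+1} = 19x_n + 60y_n, y_{n+1} = 6x_n + 19y_n. -/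
lemma pell_ten_small : ∀ a < 105, ∀ b < 34, a^2 + 31 = 10 * b^2 →
    (a = 3 ∧ b = 2) ∨ (a = 63 ∧ b = 20) := by decide

lemma pell_ten_aux : ∀ N : ℕ, ∀ x y : ℤ, y ≤ (N : ℤ) → 0 < x → 0 < y →
    x ^ 2 - 10 * y ^ 2 = -31 →
    ∃ n : ℕ,
      (fun p : ℤ × ℤ => (19 * p.1 + 60 * p.2, 6 * p.1 + 19 * p.2))^[n] (3, 2) = (x, y) ∨
      (fun p : ℤ × ℤ => (19 * p.1 + 60 * p.2, 6 * p.1 + 19 * p.2))^[n] (63, 20) = (x, y) := by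
  intro N
  induction N using Nat.strong_induction_on with
  | _ N ih =>
    intro x y hyN hx hy h
    by_cases hsmall : y ≤ 33
    · have hx104 : x ≤ 104 := by nlinarith
      have ha : ((x.toNat : ℤ)) = x := Int.toNat_of_nonneg hx.le
      have hb : ((y.toNat : ℤ)) = y := Int.toNat_of_nonneg hy.le
      have ha' : x.toNat < 105 := by omega
      have hb' : y.toNat < 34 := by omega
      have heq : x.toNat ^ 2 + 31 = 10 * y.toNat ^ 2 := by
        have : (x.toNat : ℤ) ^ 2 + 31 = 10 * (y.toNat : ℤ) ^ 2 := by rw [ha, hb]; linarith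
        exact_mod_cast this
      rcases pell_ten_small _ ha' _ hb' heq with ⟨h1, h2⟩ | ⟨h1, h2⟩
      · refine ⟨0, Or.inl ?_⟩
        simp only [Function.iterate_zero, id]
        have : x = 3 ∧ y = 2 := by omega
        rw [this.1, this.2]
      · refine ⟨0, Or.inr ?_⟩
        simp only [Function.iterate_zero, id]
        have : x = 63 ∧ y = 20 := by omega
        rw [this.1, this.2]
    · push_neg at hsmall
      have hy34 : 34 ≤ y := hsmall
      set x' := 19 * x - 60 * y with hx'def
      set y' := 19 * y - 6 * x with hy'def
      have h' : x' ^ 2 - 10 * y' ^ 2 = -31 := by rw [hx'def, hy'def]; linear_combination h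
      have hx'pos : 0 < x' := by nlinarith
      have hy'pos : 0 < y' := by nlinarith
      have hy'lt : y' < y := by nlinarith
      have hN : 34 ≤ N := by omega
      obtain ⟨n, hn⟩ := ih (N - 1) (by omega) x' y' (by omega) hx'pos hy'pos h'
      refine ⟨n + 1, ?_⟩
      have hstep : ∀ p : ℤ × ℤ,
          (fun p : ℤ × ℤ => (19 * p.1 + 60 * p.2, 6 * p.1 + 19 * p.2))^[n+1] p =
          (fun p : ℤ × ℤ => (19 * p.1 + 60 * p.2, 6 * p.1 + 19 * p.2))
            ((fun p : ℤ × ℤ => (19 * p.1 + 60 * p.2, 6 * p.1 + 19 * p.2))^[n] p) :=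
        fun p => Function.iterate_succ_apply' _ n p
      have hfinal : (fun p : ℤ × ℤ => (19 * p.1 + 60 * p.2, 6 * p.1 + 19 * p.2)) (x', y') = (x, y) := by
        simp only [Prod.mk.injEq]
        constructor <;> (rw [hx'def, hy'def]; ring)
      rcases hn with hn | hn
      · exact Or.inl (by rw [hstep, hn, hfinal])
      · exact Or.inr (by rw [hstep, hn, hfinal])

/-- Every positive solution of x^2 − 10y^2 = −31 arises from (3, 2) or (63, 20)
by iterating (x, y) ↦ (19x + 60y, 6x + 19y). -/
theorem pell_ten_solutions_structure (x y : ℤ) (hx : 0 < x) (hy : 0 < y)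
    (h : x ^ 2 - 10 * y ^ 2 = -31) :
    ∃ n : ℕ,
      (fun p : ℤ × ℤ => (19 * p.1 + 60 * p.2, 6 * p.1 + 19 * p.2))^[n] (3, 2) = (x, y) ∨
      (fun p : ℤ × ℤ => (19 * p.1 + 60 * p.2, 6 * p.1 + 19 * p.2))^[n] (63, 20) = (x, y) := by
  exact pell_ten_aux y.toNat x y (by omega) hx hy h
end

section
/- Every solution in positive integers (x, y) of the Pell equation x^2 − 3y^2 = 13 satisfies: 50 divides x if and only if x ≡ 94 (mod 241). Since 10^r ≢ 144 (mod 241) for every positive integer r, there is no solution with x = 4·10^r for an integer r ≥ 2. -/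
set_option maxRecDepth 4000

def pellS : List (ZMod 12050 × ZMod 12050) := [(4,1), (4,12049), (5,2), (5,12048), (11,6), (11,12044), (16,9), (16,12041), (40,23), (40,12027), (59,34), (59,12016), (149,86), (149,11964), (220,127), (220,11923), (556,321), (556,11729), (574,4011), (574,8039), (821,474), (821,11576), (1131,3454), (1131,8596), (1165,4602), (1165,7448), (2075,1198), (2075,10852), (2619,4446), (2619,7604), (3064,1769), (3064,10281), (3129,724), (3129,11326), (3395,4452), (3395,7598), (3950,5777), (3950,6273), (4086,1681), (4086,10369), (4801,4636), (4801,7414), (4889,3456), (4889,8594), (5484,5509), (5484,6541), (6491,5534), (6491,6516), (6526,539), (6526,11511), (7744,4471), (7744,7579), (8096,249), (8096,11801), (8430,4577), (8430,7473), (11435,5448), (11435,6602), (11460,2023), (11460,10027)]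

lemma pellS_closed : ∀ p ∈ pellS, ((2*p.1+3*p.2, p.1+2*p.2)) ∈ pellS := by
  intro p hp; fin_cases hp <;> decide

lemma pellS_prop : ∀ p ∈ pellS, (p.1.val % 50 = 0 ↔ p.1.val % 241 = 94) := by
  intro p hp; fin_cases hp <;> decide

lemma pell_mem : ∀ n : ℕ, ∀ x y : ℤ, y.toNat ≤ n → 0 < x → 0 < y →
    x ^ 2 - 3 * y ^ 2 = 13 → ((x : ZMod 12050), (y : ZMod 12050)) ∈ pellS := by
  intro n
  induction n with
  | zero => intro x y hn hx hy _; omega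
  | succ n ih =>
    intro x y hn hx hy heq
    by_cases hy3 : y ≤ 3
    · interval_cases y
      · have h4 : x = 4 := by nlinarith [sq_nonneg (x - 4), sq_nonneg (x + 4)]
        subst h4; decide
      · have h5 : x = 5 := by nlinarith [sq_nonneg (x - 5), sq_nonneg (x + 5)]
        subst h5; decide
      · exfalso
        have hx7 : x ≤ 6 := by nlinarith
        interval_cases x <;> omega
    · push_neg at hy3
      set x' : ℤ := 2*x - 3*y with hx'
      set y' : ℤ := 2*y - x with hy'
      have hxp : 0 < x' := by nlinarith
      have hyp : 0 < y' := by nlinarith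
      have hlt : y' < y := by nlinarith
      have heq' : x' ^ 2 - 3 * y' ^ 2 = 13 := by ring_nf; linarith [heq]
      have hmem := ih x' y' (by omega) hxp hyp heq'
      have := pellS_closed _ hmem
      have e1 : (x : ZMod 12050) = 2 * (x' : ZMod 12050) + 3 * (y' : ZMod 12050) := by
        have : (x : ℤ) = 2 * x' + 3 * y' := by rw [hx', hy']; ring
        rw [this]; push_cast; ring
      have e2 : (y : ZMod 12050) = (x' : ZMod 12050) + 2 * (y' : ZMod 12050) := by
        have : (y : ℤ) = x' + 2 * y' := by rw [hx', hy']; ring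
        rw [this]; push_cast; ring
      rw [e1, e2]
      exact this

lemma ten_pow_ne : ∀ r : ℕ, (10 : ZMod 241) ^ r ≠ 144 := by
  intro r
  have h30 : (10 : ZMod 241) ^ 30 = 1 := by decide
  have : (10 : ZMod 241) ^ r = (10 : ZMod 241) ^ (r % 30) := by
    conv_lhs => rw [← Nat.div_add_mod r 30, pow_add, pow_mul, h30, one_pow, one_mul]
  rw [this]
  have hlt : r % 30 < 30 := Nat.mod_lt _ (by norm_num)
  have : ∀ s : Fin 30, (10 : ZMod 241) ^ (s : ℕ) ≠ 144 := by decide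
  exact this ⟨r % 30, hlt⟩

/-- For x^2 − 3y^2 = 13 in positive integers: 50 ∣ x iff x ≡ 94 (mod 241); since
10^r ≢ 144 (mod 241) for all r ≥ 1, no solution has x = 4·10^r with r ≥ 2. -/
theorem pell_three_thirteen :
    (∀ x y : ℤ, 0 < x → 0 < y → x ^ 2 - 3 * y ^ 2 = 13 →
      (50 ∣ x ↔ x ≡ 94 [ZMOD 241])) ∧
    (∀ r : ℕ, 1 ≤ r → ¬ ((10 : ℤ) ^ r ≡ 144 [ZMOD 241])) ∧
    (∀ x y : ℤ, 0 < x → 0 < y → x ^ 2 - 3 * y ^ 2 = 13 →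
      ∀ r : ℕ, 2 ≤ r → x ≠ 4 * 10 ^ r) := by
  have part1 : ∀ x y : ℤ, 0 < x → 0 < y → x ^ 2 - 3 * y ^ 2 = 13 →
      (50 ∣ x ↔ x ≡ 94 [ZMOD 241]) := by
    intro x y hx hy heq
    have hmem := pell_mem y.toNat x y le_rfl hx hy heq
    have hp := pellS_prop _ hmem
    simp only at hp
    have hv : (((x : ZMod 12050)).val : ℤ) = x % 12050 := ZMod.val_intCast x
    rw [Int.ModEq]
    omega
  have part2 : ∀ r : ℕ, 1 ≤ r → ¬ ((10 : ℤ) ^ r ≡ 144 [ZMOD 241]) := by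
    intro r _ h
    have h' : (((10 : ℤ) ^ r : ℤ) : ZMod 241) = ((144 : ℤ) : ZMod 241) :=
      (ZMod.intCast_eq_intCast_iff _ _ _).mpr h
    push_cast at h'
    exact ten_pow_ne r h'
  refine ⟨part1, part2, ?_⟩
  intro x y hx hy heq r hr hxeq
  have hdvd : (50 : ℤ) ∣ x := by
    rw [hxeq]
    have : (10 : ℤ) ^ r = 10 ^ 2 * 10 ^ (r - 2) := by
      rw [← pow_add]; congr 1; omega
    rw [this]
    exact ⟨8 * 10 ^ (r - 2), by ring⟩
  have hmod := (part1 x y hx hy heq).mp hdvd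
  rw [hxeq] at hmod
  have h' : (((4 * 10 ^ r : ℤ)) : ZMod 241) = ((94 : ℤ) : ZMod 241) :=
    (ZMod.intCast_eq_intCast_iff _ _ _).mpr hmod
  push_cast at h'
  have h10 : (10 : ZMod 241) ^ r = 144 := by
    have h2 : (181 : ZMod 241) * (4 * (10 : ZMod 241) ^ r) = 181 * 94 := by rw [h']
    rw [← mul_assoc] at h2
    have e1 : (181 : ZMod 241) * 4 = 1 := by decide
    have e2 : (181 : ZMod 241) * 94 = 144 := by decide
    rw [e1, e2, one_mul] at h2
    exact h2
  exact ten_pow_ne r h10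
end

section
/- Every solution in positive integers (x, y) of the equation x^2 − 30y^2 = −39 with 64 dividing y satisfies y ≡ 3 (mod 31). Since 10^r ≢ 24 (mod 31) for every positive integer r, there is no solution with y = 4·10^r for an integer r ≥ 4. -/
private def S : List (ℕ × ℕ) := [(9,2), (21,4), (87,1526), (91,456), (149,1884), (213,52), (219,40), (297,586), (393,1182), (421,1888), (427,1420), (469,1684), (471,86), (489,998), (533,1340), (549,1176), (567,866), (585,1230), (617,602), (649,1714), (661,740), (731,1088), (741,1904), (777,146), (809,762), (841,878), (855,1770), (859,312), (875,812), (933,80), (937,1606), (951,1918), (1033,1918), (1047,1606), (1051,80), (1109,812), (1125,312), (1129,1770), (1143,878), (1175,762), (1207,146), (1243,1904), (1253,1088), (1323,740), (1335,1714), (1367,602), (1399,1230), (1417,866), (1435,1176), (1451,1340), (1495,998), (1513,86), (1515,1684), (1557,1420), (1563,1888), (1591,1182), (1687,586), (1765,40), (1771,52), (1835,1884), (1893,456), (1897,1526), (1963,4), (1975,2)]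

private lemma S_T : ∀ p ∈ S, (((11 * p.1 + 60 * p.2) % 1984, (2 * p.1 + 11 * p.2) % 1984) : ℕ × ℕ) ∈ S := by decide

private lemma S_neg : ∀ p ∈ S, (((1984 - p.1) % 1984, p.2) : ℕ × ℕ) ∈ S := by decide

private lemma S_mod : ∀ p ∈ S, p.2 % 64 = 0 → p.2 % 31 = 3 := by decide

private lemma key : ∀ n : ℕ, ∀ x y : ℤ, 0 < x → 0 < y → y.natAbs = n →
    x ^ 2 - 30 * y ^ 2 = -39 →
    ∃ p ∈ S, x % 1984 = (p.1 : ℤ) ∧ y % 1984 = (p.2 : ℤ) := by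
  intro n
  induction n using Nat.strong_induction_on with
  | _ n ih =>
    intro x y hx hy hyn heq
    rcases lt_or_ge y 3 with h3 | h3
    · interval_cases y
      · exfalso; nlinarith [sq_nonneg x]
      · have hx9 : x = 9 := by nlinarith [sq_nonneg (x - 9), sq_nonneg (x + 9)]
        subst hx9
        exact ⟨(9, 2), by decide, by norm_num⟩
    · set x0 : ℤ := 11 * x - 60 * y with hx0
      set y' : ℤ := 11 * y - 2 * x with hy'
      have heq' : x0 ^ 2 - 30 * y' ^ 2 = -39 := by rw [hx0, hy']; ring_nf; linarith [heq]
      have hy'pos : 0 < y' := by nlinarith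
      have hy'lt : y' < y := by nlinarith
      have hx0ne : x0 ≠ 0 := by
        intro h0
        rw [h0] at heq'
        have h2 : (2 : ℤ) ∣ 30 * y' ^ 2 := ⟨15 * y' ^ 2, by ring⟩
        have h39 : 30 * y' ^ 2 = 39 := by linarith
        rw [h39] at h2
        norm_num at h2
      have hsz : y'.natAbs < n := by rw [← hyn]; omega
      -- membership for (x0, y') (with x0 possibly negative)
      obtain ⟨q, hqS, hq1, hq2⟩ :
          ∃ q ∈ S, x0 % 1984 = (q.1 : ℤ) ∧ y' % 1984 = (q.2 : ℤ) := by
        rcases hx0ne.lt_or_gt with hneg | hpos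
        · obtain ⟨p, hpS, h1, h2⟩ :=
            ih y'.natAbs hsz (-x0) y' (by linarith) hy'pos rfl (by linarith [heq'])
          refine ⟨((1984 - p.1) % 1984, p.2), S_neg p hpS, ?_, h2⟩
          simp only
          omega
        · exact ih y'.natAbs hsz x0 y' hpos hy'pos rfl heq'
      refine ⟨((11 * q.1 + 60 * q.2) % 1984, (2 * q.1 + 11 * q.2) % 1984), S_T q hqS, ?_, ?_⟩ <;>
        · simp only
          omega

/-- For x^2 − 30y^2 = −39 in positive integers with 64 ∣ y: y ≡ 3 (mod 31); since
10^r ≢ 24 (mod 31) for all r ≥ 1, no solution has y = 4·10^r with r ≥ 4. -/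
theorem pell_thirty_minus_thirtynine :
    (∀ x y : ℤ, 0 < x → 0 < y → x ^ 2 - 30 * y ^ 2 = -39 → 64 ∣ y →
      y ≡ 3 [ZMOD 31]) ∧
    (∀ r : ℕ, 1 ≤ r → ¬ ((10 : ℤ) ^ r ≡ 24 [ZMOD 31])) ∧
    (∀ x y : ℤ, 0 < x → 0 < y → x ^ 2 - 30 * y ^ 2 = -39 →
      ∀ r : ℕ, 4 ≤ r → y ≠ 4 * 10 ^ r) := by
  have part1 : ∀ x y : ℤ, 0 < x → 0 < y → x ^ 2 - 30 * y ^ 2 = -39 → 64 ∣ y →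
      y ≡ 3 [ZMOD 31] := by
    intro x y hx hy heq hdvd
    obtain ⟨p, hpS, h1, h2⟩ := key y.natAbs x y hx hy rfl heq
    have h64 : p.2 % 64 = 0 := by omega
    have h31 : p.2 % 31 = 3 := S_mod p hpS h64
    rw [Int.ModEq]
    omega
  have pow10 : ∀ r : ℕ, ((10 : ZMod 31)) ^ r ≠ 24 := by
    intro r
    have h15 : ((10 : ZMod 31)) ^ 15 = 1 := by decide
    have h : (10 : ZMod 31) ^ r = 10 ^ (r % 15) := by
      conv_lhs => rw [← Nat.div_add_mod r 15, pow_add, pow_mul, h15, one_pow, one_mul]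
    rw [h]
    have hlt : r % 15 < 15 := Nat.mod_lt _ (by norm_num)
    generalize r % 15 = s at hlt ⊢
    interval_cases s <;> decide
  have part2 : ∀ r : ℕ, 1 ≤ r → ¬ ((10 : ℤ) ^ r ≡ 24 [ZMOD 31]) := by
    intro r _ h
    have h2 := (ZMod.intCast_eq_intCast_iff _ _ 31).mpr h
    push_cast at h2
    exact pow10 r h2
  refine ⟨part1, part2, ?_⟩
  intro x y hx hy heq r hr hye
  obtain ⟨k, rfl⟩ : ∃ k, r = 4 + k := ⟨r - 4, by omega⟩
  have hdvd : (64 : ℤ) ∣ y := ⟨625 * 10 ^ k, by rw [hye, pow_add]; ring⟩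
  have h3 := part1 x y hx hy heq hdvd
  rw [hye] at h3
  apply part2 (4 + k) (by omega)
  calc (10 : ℤ) ^ (4 + k) ≡ 32 * 10 ^ (4 + k) [ZMOD 31] :=
        (Int.modEq_iff_dvd.mpr ⟨10 ^ (4 + k), by ring⟩)
    _ = 8 * (4 * 10 ^ (4 + k)) := by ring
    _ ≡ 8 * 3 [ZMOD 31] := h3.mul_left 8
    _ = 24 := by norm_num
end
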